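/- Let G be an abelian group, Z1,…,Zn independent discrete random variables in G, and let C be an r-regular hypergraph on [n] (every index i lies in exactly r sets of C). Then r · H(Z1+⋯+Zn) ≤ ∑_{s∈C} H(∑_{i∈s} Z_i). -/

import Mathlib

open Finset

/-- Shannon entropy of a discrete random variable `X` on a finite probability
space with probability mass function `p`. -/
noncomputable def ent {Ω S : Type*} [Fintype Ω] (p : Ω → ℝ) (X : Ω → S) : ℝ :=
  letI := Classical.decEq S
  ∑ y ∈ Finset.univ.image X,
    Real.negMulLog (∑ ω ∈ Finset.univ.filter (fun ω => X ω = y), p ω)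

/-- Conditional Shannon entropy `H(X | Y)`. -/
noncomputable def condEnt {Ω S T : Type*} [Fintype Ω] (p : Ω → ℝ)
    (X : Ω → S) (Y : Ω → T) : ℝ :=
  ent p (fun ω => (X ω, Y ω)) - ent p Y

/-- Mutual information `I(X ; Y)`. -/
noncomputable def mutInf {Ω S T : Type*} [Fintype Ω] (p : Ω → ℝ)
    (X : Ω → S) (Y : Ω → T) : ℝ :=
  ent p X + ent p Y - ent p (fun ω => (X ω, Y ω))

/-- `p` is a probability mass function. -/
def IsProbMass {Ω : Type*} [Fintype Ω] (p : Ω → ℝ) : Prop :=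
  (∀ ω, 0 ≤ p ω) ∧ ∑ ω, p ω = 1

/-- The random variables `Z i` are mutually independent. -/
def IndepRVs {Ω G : Type*} [Fintype Ω] {n : ℕ} (p : Ω → ℝ) (Z : Fin n → Ω → G) : Prop :=
  letI := Classical.decEq G
  ∀ z : Fin n → G,
    (∑ ω ∈ Finset.univ.filter (fun ω => ∀ i, Z i ω = z i), p ω)
      = ∏ i, ∑ ω ∈ Finset.univ.filter (fun ω => Z i ω = z i), p ω

/-!
Write `Z_s = ∑ i ∈ s, Z i`. The set function `s ↦ H(Z_s)` is submodular: with `A = u \ v`,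
`B = u ∩ v`, `C = v \ u`, Shannon's inequality `H(X, Y, W) + H(W) ≤ H(X, W) + H(Y, W)` for
`X = Z_A`, `Y = Z_C`, `W = Z_{u ∪ v}` becomes `H(Z_{u ∪ v}) + H(Z_B) ≤ H(Z_u) + H(Z_v)`, because
`(Z_A, Z_C, Z_{u ∪ v})` and `(Z_A, Z_{u ∪ v})` are invertible functions of `(Z_A, Z_B, Z_C)` and
`(Z_A, Z_v)`, and sums over disjoint blocks are independent.

A submodular `f` with `f ∅ = 0` satisfies `r f(U) ≤ ∑_{s ∈ C} f(s ∩ U)` whenever each point of `U`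
lies in exactly `r` members of `C`: add the points of `U` one at a time; the gain from adding `a` to
`s ∩ V` is at least the gain from adding it to `V`, and `a` lies in exactly `r` sets `s`.
-/

open Real Function

theorem mul_sub_le_sum_inter_sub_of_submodular {ι : Type*} [DecidableEq ι] (f : Finset ι → ℝ)
    (hf : ∀ s t, f (s ∪ t) + f (s ∩ t) ≤ f s + f t) (C : Finset (Finset ι)) (r : ℕ)
    (U : Finset ι) (hreg : ∀ i ∈ U, (C.filter (fun s => i ∈ s)).card = r) :
    r * (f U - f ∅) ≤ ∑ s ∈ C, (f (s ∩ U) - f ∅) := by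
  induction U using Finset.induction_on with
  | empty => simp
  | @insert a V ha ih =>
    have marginal_gain (s : Finset ι) :
        (if a ∈ s then f (insert a V) - f V else 0) ≤ f (s ∩ insert a V) - f (s ∩ V) := by
      split_ifs with has
      · have key := hf (insert a (s ∩ V)) V
        rw [insert_union, union_eq_right.2 inter_subset_right, insert_inter_of_notMem ha,
          inter_assoc, inter_self, ← inter_insert_of_mem has] at key
        linarith
      · rw [inter_insert_of_notMem has, sub_self]
    have hgain : (r : ℝ) * (f (insert a V) - f V)
        ≤ ∑ s ∈ C, (f (s ∩ insert a V) - f (s ∩ V)) := by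
      rw [← hreg a (mem_insert_self a V), ← nsmul_eq_mul, ← sum_const, sum_filter]
      exact sum_le_sum fun s _ => marginal_gain s
    have hV := ih fun i hi => hreg i (mem_insert_of_mem hi)
    calc (r : ℝ) * (f (insert a V) - f ∅)
        = r * (f V - f ∅) + r * (f (insert a V) - f V) := by ring
      _ ≤ ∑ s ∈ C, (f (s ∩ V) - f ∅) + ∑ s ∈ C, (f (s ∩ insert a V) - f (s ∩ V)) :=
        add_le_add hV hgain
      _ = ∑ s ∈ C, (f (s ∩ insert a V) - f ∅) := by
        rw [← sum_add_distrib]; exact sum_congr rfl fun s _ => by ring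

section Distribution

variable {Ω Ω' S T : Type*} [Fintype Ω] [Fintype Ω'] {p : Ω → ℝ}

section Decidable

variable [DecidableEq S] [DecidableEq T]

def prob (p : Ω → ℝ) (X : Ω → S) (y : S) : ℝ :=
  ∑ ω with X ω = y, p ω

lemma ent_eq_sum_image (p : Ω → ℝ) (X : Ω → S) :
    ent p X = ∑ y ∈ univ.image X, negMulLog (prob p X y) := by
  unfold ent prob
  congr!

lemma prob_nonneg (hp : ∀ ω, 0 ≤ p ω) (X : Ω → S) (y : S) : 0 ≤ prob p X y :=
  sum_nonneg fun ω _ => hp ω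

lemma sum_prob (X : Ω → S) (A : Finset S) :
    ∑ y ∈ A, prob p X y = ∑ ω with X ω ∈ A, p ω := by
  rw [← sum_fiberwise_of_maps_to (g := X) (t := A) fun ω hω => (mem_filter.1 hω).2]
  refine sum_congr rfl fun y hy => ?_
  rw [prob, filter_filter]
  exact sum_congr (filter_congr fun ω _ => ⟨fun h => ⟨h ▸ hy, h⟩, And.right⟩) fun _ _ => rfl

lemma sum_prob_eq_one (hp : ∑ ω, p ω = 1) {X : Ω → S} {A : Finset S} (hA : ∀ ω, X ω ∈ A) :
    ∑ y ∈ A, prob p X y = 1 := by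
  rw [sum_prob, filter_true_of_mem fun ω _ => hA ω, hp]

lemma prob_eq_zero_of_notMem_image {X : Ω → S} {y : S} (hy : y ∉ univ.image X) :
    prob p X y = 0 :=
  sum_eq_zero fun ω hω => absurd ((mem_filter.1 hω).2 ▸ mem_image_of_mem X (mem_univ ω)) hy

lemma ent_eq_sum_of_image_subset {X : Ω → S} {A : Finset S} (hA : univ.image X ⊆ A) :
    ent p X = ∑ y ∈ A, negMulLog (prob p X y) := by
  rw [ent_eq_sum_image]
  exact sum_subset hA fun y _ hy => by rw [prob_eq_zero_of_notMem_image hy, negMulLog_zero]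

lemma prob_comp {X : Ω → S} {A : Finset S} (hA : ∀ ω, X ω ∈ A) (g : S → T) (t : T) :
    prob p (fun ω => g (X ω)) t = ∑ y ∈ A with g y = t, prob p X y := by
  rw [sum_prob, prob]
  exact sum_congr (filter_congr fun ω _ => by simp [hA ω]) fun _ _ => rfl

lemma prob_le_prob_comp (hp : ∀ ω, 0 ≤ p ω) (X : Ω → S) (g : S → T) (y : S) :
    prob p X y ≤ prob p (fun ω => g (X ω)) (g y) :=
  sum_le_sum_of_subset_of_nonneg
    (fun ω hω => mem_filter.2 ⟨mem_univ ω, congrArg g (mem_filter.1 hω).2⟩) fun ω _ _ => hp ω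

lemma image_univ_comp (X : Ω → S) (g : S → T) :
    univ.image (fun ω => g (X ω)) = (univ.image X).image g :=
  image_image.symm

lemma ent_comp_eq_sum (X : Ω → S) (g : S → T) :
    ent p (fun ω => g (X ω))
      = ∑ y ∈ univ.image X, prob p X y * -log (prob p (fun ω => g (X ω)) (g y)) := by
  have hX : ∀ ω, X ω ∈ univ.image X := fun ω => mem_image_of_mem X (mem_univ ω)
  rw [ent_eq_sum_image, image_univ_comp,
    ← sum_fiberwise_of_maps_to (g := g) fun y hy => mem_image_of_mem g hy]
  refine sum_congr rfl fun t _ => ?_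
  rw [sum_congr rfl fun y hy => by rw [(mem_filter.1 hy).2], ← sum_mul, ← prob_comp hX,
    negMulLog, neg_mul, mul_neg]

lemma sum_prob_pair_left (X : Ω → S) (Y : Ω → T) (t : T) :
    ∑ s ∈ univ.image X, prob p (fun ω => (X ω, Y ω)) (s, t) = prob p Y t := by
  rw [prob, ← sum_fiberwise_of_maps_to (g := X) fun ω _ => mem_image_of_mem X (mem_univ ω)]
  refine sum_congr rfl fun s _ => ?_
  rw [prob, filter_filter]
  exact sum_congr (filter_congr fun ω _ => by rw [Prod.mk.injEq, and_comm]) fun _ _ => rfl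

lemma prob_prod_eq_mul (p : Ω → ℝ) (p' : Ω' → ℝ) (X : Ω → S) (Y : Ω' → T) (s : S) (t : T) :
    prob (fun ω : Ω × Ω' => p ω.1 * p' ω.2) (fun ω => (X ω.1, Y ω.2)) (s, t)
      = prob p X s * prob p' Y t := by
  rw [prob, prob, prob, sum_mul_sum, ← sum_product', ← filter_product, univ_product_univ]
  exact sum_congr (filter_congr fun _ _ => Prod.ext_iff) fun _ _ => rfl

lemma ent_pair_eq_add_of_indep (hp : ∑ ω, p ω = 1) (X : Ω → S) (Y : Ω → T)
    (hXY : ∀ s t, prob p (fun ω => (X ω, Y ω)) (s, t) = prob p X s * prob p Y t) :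
    ent p (fun ω => (X ω, Y ω)) = ent p X + ent p Y := by
  have hX : ∀ ω, X ω ∈ univ.image X := fun ω => mem_image_of_mem X (mem_univ ω)
  have hY : ∀ ω, Y ω ∈ univ.image Y := fun ω => mem_image_of_mem Y (mem_univ ω)
  have hsub : univ.image (fun ω => (X ω, Y ω)) ⊆ univ.image X ×ˢ univ.image Y := fun z hz => by
    obtain ⟨ω, _, rfl⟩ := mem_image.1 hz
    exact mk_mem_product (hX ω) (hY ω)
  rw [ent_eq_sum_of_image_subset hsub, sum_product, ent_eq_sum_image, ent_eq_sum_image]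
  simp only [hXY, negMulLog_mul, sum_add_distrib, ← sum_mul, ← mul_sum, sum_prob_eq_one hp hX,
    sum_prob_eq_one hp hY, one_mul]

end Decidable

lemma ent_comp_of_injective (X : Ω → S) {g : S → T} (hg : Injective g) :
    ent p (fun ω => g (X ω)) = ent p X := by
  classical
  have hprob (y : S) : prob p (fun ω => g (X ω)) (g y) = prob p X y := by
    simp only [prob, hg.eq_iff]
  rw [ent_eq_sum_image, ent_eq_sum_image, image_univ_comp, sum_image fun x _ y _ h => hg h]
  simp only [hprob]

lemma ent_const (hp : ∑ ω, p ω = 1) (c : S) : ent p (fun _ => c) = 0 := by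
  classical
  have hsub : univ.image (fun _ : Ω => c) ⊆ {c} := fun y hy => by
    obtain ⟨_, _, rfl⟩ := mem_image.1 hy
    exact mem_singleton_self c
  rw [ent_eq_sum_of_image_subset hsub, sum_singleton, prob, filter_true_of_mem fun _ _ => rfl,
    hp, negMulLog_one]

end Distribution

/-- Gibbs' inequality. -/
lemma sum_mul_log_le_sum_mul_log {ι : Type*} (s : Finset ι) {m q : ι → ℝ}
    (hm : ∀ i ∈ s, 0 ≤ m i) (hq : ∀ i ∈ s, 0 ≤ q i) (hmq : ∀ i ∈ s, 0 < m i → 0 < q i)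
    (hsum : ∑ i ∈ s, q i ≤ ∑ i ∈ s, m i) :
    ∑ i ∈ s, m i * log (q i) ≤ ∑ i ∈ s, m i * log (m i) := by
  have hterm : ∀ i ∈ s, m i * log (q i) - m i * log (m i) ≤ q i - m i := fun i hi => by
    rcases (hm i hi).eq_or_lt with h0 | hpos
    · simp [← h0, hq i hi]
    · have hlog := log_le_sub_one_of_pos (div_pos (hmq i hi hpos) hpos)
      rw [log_div (hmq i hi hpos).ne' hpos.ne'] at hlog
      have := mul_le_mul_of_nonneg_left hlog hpos.le
      rw [mul_sub_one, mul_div_cancel₀ _ hpos.ne'] at this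
      linarith
  have := sum_le_sum hterm
  rw [sum_sub_distrib, sum_sub_distrib] at this
  linarith

section Submodularity

variable {Ω S₁ S₂ S₃ : Type*} [Fintype Ω] {p : Ω → ℝ}

lemma sum_prob_mul_prob_div_prob_le_one [DecidableEq S₁] [DecidableEq S₂] [DecidableEq S₃]
    (hp : IsProbMass p) (X : Ω → S₁) (Y : Ω → S₂) (W : Ω → S₃) :
    ∑ y ∈ univ.image (fun ω => (X ω, Y ω, W ω)),
      prob p (fun ω => (X ω, W ω)) (y.1, y.2.2) * prob p (fun ω => (Y ω, W ω)) (y.2.1, y.2.2)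
        / prob p W y.2.2 ≤ 1 := by
  have hsub : univ.image (fun ω => (X ω, Y ω, W ω))
      ⊆ univ.image X ×ˢ univ.image Y ×ˢ univ.image W := fun z hz => by
    obtain ⟨ω, _, rfl⟩ := mem_image.1 hz
    simp
  calc _ ≤ ∑ y ∈ univ.image X ×ˢ univ.image Y ×ˢ univ.image W,
        prob p (fun ω => (X ω, W ω)) (y.1, y.2.2) * prob p (fun ω => (Y ω, W ω)) (y.2.1, y.2.2)
          / prob p W y.2.2 :=
        sum_le_sum_of_subset_of_nonneg hsub fun _ _ _ => div_nonneg
          (mul_nonneg (prob_nonneg hp.1 _ _) (prob_nonneg hp.1 _ _)) (prob_nonneg hp.1 _ _)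
    _ = ∑ w ∈ univ.image W, (∑ a ∈ univ.image X, prob p (fun ω => (X ω, W ω)) (a, w))
          * (∑ b ∈ univ.image Y, prob p (fun ω => (Y ω, W ω)) (b, w)) / prob p W w := by
        rw [sum_product_right, sum_product_right]
        refine sum_congr rfl fun w _ => ?_
        rw [sum_mul_sum, sum_div, sum_comm]
        simp only [sum_div]
    _ = 1 := by
        simp only [sum_prob_pair_left, mul_self_div_self]
        exact sum_prob_eq_one hp.2 fun ω => mem_image_of_mem W (mem_univ ω)

/-- Gibbs' inequality against the coupling `P(x, w) P(y, w) / P(w)`, under which `X` and `Y` are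
conditionally independent given `W`. -/
lemma ent_triple_add_ent_le (hp : IsProbMass p) (X : Ω → S₁) (Y : Ω → S₂) (W : Ω → S₃) :
    ent p (fun ω => (X ω, Y ω, W ω)) + ent p W
      ≤ ent p (fun ω => (X ω, W ω)) + ent p (fun ω => (Y ω, W ω)) := by
  classical
  set V := fun ω => (X ω, Y ω, W ω)
  set m := prob p V
  set fXW := fun y : S₁ × S₂ × S₃ => prob p (fun ω => (X ω, W ω)) (y.1, y.2.2)
  set fYW := fun y : S₁ × S₂ × S₃ => prob p (fun ω => (Y ω, W ω)) (y.2.1, y.2.2)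
  set fW := fun y : S₁ × S₂ × S₃ => prob p W y.2.2
  have eV : ent p V = ∑ y ∈ univ.image V, m y * -log (m y) := ent_comp_eq_sum V id
  have eXW : ent p (fun ω => (X ω, W ω)) = ∑ y ∈ univ.image V, m y * -log (fXW y) :=
    ent_comp_eq_sum V fun y => (y.1, y.2.2)
  have eYW : ent p (fun ω => (Y ω, W ω)) = ∑ y ∈ univ.image V, m y * -log (fYW y) :=
    ent_comp_eq_sum V fun y => (y.2.1, y.2.2)
  have eW : ent p W = ∑ y ∈ univ.image V, m y * -log (fW y) := ent_comp_eq_sum V fun y => y.2.2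
  have hpos (y : S₁ × S₂ × S₃) (hy : 0 < m y) : 0 < fXW y ∧ 0 < fYW y ∧ 0 < fW y :=
    ⟨hy.trans_le (prob_le_prob_comp hp.1 V (fun y => (y.1, y.2.2)) y),
      hy.trans_le (prob_le_prob_comp hp.1 V (fun y => (y.2.1, y.2.2)) y),
      hy.trans_le (prob_le_prob_comp hp.1 V (fun y => y.2.2) y)⟩
  have hgibbs := sum_mul_log_le_sum_mul_log (univ.image V) (q := fun y => fXW y * fYW y / fW y)
    (fun y _ => prob_nonneg hp.1 V y)
    (fun y _ => div_nonneg (mul_nonneg (prob_nonneg hp.1 _ _) (prob_nonneg hp.1 _ _))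
      (prob_nonneg hp.1 _ _))
    (fun y _ hy => by obtain ⟨h1, h2, h3⟩ := hpos y hy; positivity)
    (by rw [sum_prob_eq_one hp.2 fun ω => mem_image_of_mem V (mem_univ ω)]
        exact sum_prob_mul_prob_div_prob_le_one hp X Y W)
  have hlog : ∀ y ∈ univ.image V, m y * log (fXW y * fYW y / fW y)
      = m y * log (fXW y) + m y * log (fYW y) - m y * log (fW y) := fun y _ => by
    rcases (prob_nonneg hp.1 V y).eq_or_lt with h0 | hy
    · simp [m, ← h0]
    · obtain ⟨h1, h2, h3⟩ := hpos y hy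
      rw [log_div (by positivity) h3.ne', log_mul h1.ne' h2.ne']
      ring
  rw [sum_congr rfl hlog, sum_sub_distrib, sum_add_distrib] at hgibbs
  simp only [eV, eXW, eYW, eW, mul_neg, sum_neg_distrib]
  linarith

end Submodularity

section Independence

variable {Ω G : Type*} [Fintype Ω] {n : ℕ} {p : Ω → ℝ} {Z : Fin n → Ω → G}

lemma IndepRVs.prob_eq_prod [DecidableEq G] (hZ : IndepRVs p Z) (z : Fin n → G) :
    prob p (fun ω i => Z i ω) z = ∏ i, prob p (Z i) (z i) := by
  simp only [prob, funext_iff]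
  convert hZ z

lemma IndepRVs.sum_forall_mem_eq_prod [DecidableEq G] (hZ : IndepRVs p Z)
    (t : Fin n → Finset G) :
    ∑ ω with ∀ i, Z i ω ∈ t i, p ω = ∏ i, ∑ ω with Z i ω ∈ t i, p ω := by
  calc ∑ ω with ∀ i, Z i ω ∈ t i, p ω
      = ∑ ω with (fun i => Z i ω) ∈ Fintype.piFinset t, p ω := by
        simp only [Fintype.mem_piFinset]
    _ = ∑ z ∈ Fintype.piFinset t, ∏ i, prob p (Z i) (z i) := by
        rw [← sum_prob]
        exact sum_congr rfl fun z _ => hZ.prob_eq_prod z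
    _ = ∏ i, ∑ ω with Z i ω ∈ t i, p ω := by
        rw [← prod_univ_sum]
        exact prod_congr rfl fun i _ => sum_prob _ _

lemma IndepRVs.sum_forall_eq_prod [DecidableEq G] (hp : ∑ ω, p ω = 1) (hZ : IndepRVs p Z)
    (s : Finset (Fin n)) (z : Fin n → G) :
    ∑ ω with ∀ i ∈ s, Z i ω = z i, p ω = ∏ i ∈ s, prob p (Z i) (z i) := by
  have h := hZ.sum_forall_mem_eq_prod fun i => if i ∈ s then {z i} else univ.image (Z i)
  rw [← Fintype.prod_ite_mem]
  convert h using 2 with ω _ i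
  · refine filter_congr fun ω _ => forall_congr' fun i => ?_
    split_ifs with hi <;> simp [hi]
  · split_ifs with hi
    · rw [← sum_prob, sum_singleton]
    · rw [← sum_prob, sum_prob_eq_one hp fun ω => mem_image_of_mem (Z i) (mem_univ ω)]

/-- Resampling the coordinates outside `s` from an independent copy of the sample space does not
change the joint law of `Z`. -/
lemma IndepRVs.prob_mix [DecidableEq G] (hp : ∑ ω, p ω = 1) (hZ : IndepRVs p Z)
    (s : Finset (Fin n)) (z : Fin n → G) :
    prob (fun ω : Ω × Ω => p ω.1 * p ω.2) (fun ω i => if i ∈ s then Z i ω.1 else Z i ω.2) z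
      = prob p (fun ω i => Z i ω) z := by
  have hfilter :
      univ.filter (fun ω : Ω × Ω => (fun i => if i ∈ s then Z i ω.1 else Z i ω.2) = z)
      = (univ.filter fun ω => ∀ i ∈ s, Z i ω = z i) ×ˢ
          (univ.filter fun ω => ∀ i ∈ sᶜ, Z i ω = z i) := by
    ext ω
    simp only [mem_filter, mem_univ, true_and, mem_product, funext_iff, mem_compl]
    constructor
    · intro h
      exact ⟨fun i hi => by simpa [hi] using h i, fun i hi => by simpa [hi] using h i⟩
    · rintro ⟨h₁, h₂⟩ i
      split_ifs with hi
      exacts [h₁ i hi, h₂ i hi]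
  rw [prob, hfilter, sum_product, ← sum_mul_sum, hZ.sum_forall_eq_prod hp,
    hZ.sum_forall_eq_prod hp, prod_mul_prod_compl, hZ.prob_eq_prod]

lemma IndepRVs.prob_pair_eq_mul {A B : Type*} [DecidableEq G] [DecidableEq A] [DecidableEq B]
    (hp : ∑ ω, p ω = 1) (hZ : IndepRVs p Z) {s : Finset (Fin n)}
    {F : (Fin n → G) → A} {F' : (Fin n → G) → B} (hF : DependsOn F s)
    (hF' : DependsOn F' (↑s)ᶜ) (a : A) (b : B) :
    prob p (fun ω => (F (Z · ω), F' (Z · ω))) (a, b)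
      = prob p (fun ω => F (Z · ω)) a * prob p (fun ω => F' (Z · ω)) b := by
  set mix : Ω × Ω → Fin n → G := fun ω i => if i ∈ s then Z i ω.1 else Z i ω.2
  set T := Fintype.piFinset fun i => univ.image (Z i)
  have hZT : ∀ ω, (Z · ω) ∈ T := fun ω => by simp [T]
  have hmixT : ∀ ω, mix ω ∈ T := fun ω => by
    simp only [T, mix, Fintype.mem_piFinset]
    intro i
    split_ifs <;> exact mem_image_of_mem _ (mem_univ _)
  -- on the two-copy space, `F` only reads the first copy and `F'` only the second
  have hsplit : ∀ ω, (F (mix ω), F' (mix ω)) = (F (Z · ω.1), F' (Z · ω.2)) := fun ω =>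
    Prod.ext (hF fun i hi => if_pos hi) (hF' fun i hi => if_neg hi)
  calc prob p (fun ω => (F (Z · ω), F' (Z · ω))) (a, b)
      = prob (fun ω : Ω × Ω => p ω.1 * p ω.2) (fun ω => (F (mix ω), F' (mix ω))) (a, b) := by
        rw [prob_comp hZT (fun z => (F z, F' z)), prob_comp hmixT (fun z => (F z, F' z))]
        exact sum_congr rfl fun z _ => (hZ.prob_mix hp s z).symm
    _ = prob p (fun ω => F (Z · ω)) a * prob p (fun ω => F' (Z · ω)) b := by
        simp only [hsplit]
        exact prob_prod_eq_mul p p (fun ω => F (Z · ω)) (fun ω => F' (Z · ω)) a b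

lemma IndepRVs.ent_pair_eq_add {A B : Type*} (hp : ∑ ω, p ω = 1) (hZ : IndepRVs p Z)
    {s : Finset (Fin n)} {F : (Fin n → G) → A} {F' : (Fin n → G) → B} (hF : DependsOn F s)
    (hF' : DependsOn F' (↑s)ᶜ) :
    ent p (fun ω => (F (Z · ω), F' (Z · ω)))
      = ent p (fun ω => F (Z · ω)) + ent p (fun ω => F' (Z · ω)) := by
  classical
  exact ent_pair_eq_add_of_indep hp _ _ (hZ.prob_pair_eq_mul hp hF hF')

end Independence

section Sums

variable {Ω G : Type*} [Fintype Ω] [AddCommGroup G] {n : ℕ} {p : Ω → ℝ}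
  {Z : Fin n → Ω → G}

lemma dependsOn_sum (u : Finset (Fin n)) : DependsOn (fun z : Fin n → G => ∑ i ∈ u, z i) u :=
  fun _ _ h => sum_congr rfl h

lemma IndepRVs.ent_sum_pair (hp : ∑ ω, p ω = 1) (hZ : IndepRVs p Z) {u v : Finset (Fin n)}
    (huv : Disjoint u v) :
    ent p (fun ω => (∑ i ∈ u, Z i ω, ∑ i ∈ v, Z i ω))
      = ent p (fun ω => ∑ i ∈ u, Z i ω) + ent p (fun ω => ∑ i ∈ v, Z i ω) :=
  hZ.ent_pair_eq_add hp (dependsOn_sum u)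
    ((dependsOn_sum v).mono (Set.subset_compl_iff_disjoint_left.2 (disjoint_coe.2 huv)))

lemma IndepRVs.ent_sum_union_pair (hp : ∑ ω, p ω = 1) (hZ : IndepRVs p Z)
    {u v : Finset (Fin n)} (huv : Disjoint u v) :
    ent p (fun ω => (∑ i ∈ u, Z i ω, ∑ i ∈ u ∪ v, Z i ω))
      = ent p (fun ω => ∑ i ∈ u, Z i ω) + ent p (fun ω => ∑ i ∈ v, Z i ω) := by
  have hinj : Injective fun x : G × G => (x.1, x.1 + x.2) := fun x y h => by
    simp only [Prod.mk.injEq] at h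
    exact Prod.ext h.1 (by simpa [h.1] using h.2)
  simp only [sum_union huv]
  rw [ent_comp_of_injective (fun ω => (∑ i ∈ u, Z i ω, ∑ i ∈ v, Z i ω)) hinj,
    hZ.ent_sum_pair hp huv]

lemma IndepRVs.ent_sum_union_triple (hp : ∑ ω, p ω = 1) (hZ : IndepRVs p Z)
    {u v w : Finset (Fin n)} (huv : Disjoint u v) (huw : Disjoint u w) (hvw : Disjoint v w) :
    ent p (fun ω => (∑ i ∈ u, Z i ω, ∑ i ∈ w, Z i ω, ∑ i ∈ u ∪ v ∪ w, Z i ω))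
      = ent p (fun ω => ∑ i ∈ u, Z i ω) + ent p (fun ω => ∑ i ∈ v, Z i ω)
        + ent p (fun ω => ∑ i ∈ w, Z i ω) := by
  have hinj : Injective fun x : G × G × G => (x.1, x.2.2, x.1 + x.2.1 + x.2.2) :=
    fun x y h => by
      simp only [Prod.mk.injEq] at h
      refine Prod.ext h.1 (Prod.ext ?_ h.2.1)
      simpa [h.1, h.2.1] using h.2.2
  have hvw_dep : DependsOn (fun z : Fin n → G => (∑ i ∈ v, z i, ∑ i ∈ w, z i)) (↑u)ᶜ :=
    fun z z' h => Prod.ext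
      (dependsOn_sum v fun i hi => h i (Set.subset_compl_iff_disjoint_left.2
        (disjoint_coe.2 huv) hi))
      (dependsOn_sum w fun i hi => h i (Set.subset_compl_iff_disjoint_left.2
        (disjoint_coe.2 huw) hi))
  simp only [sum_union (disjoint_union_left.2 ⟨huw, hvw⟩), sum_union huv]
  rw [ent_comp_of_injective (fun ω => (∑ i ∈ u, Z i ω, ∑ i ∈ v, Z i ω, ∑ i ∈ w, Z i ω))
    hinj, hZ.ent_pair_eq_add hp (dependsOn_sum u) hvw_dep, hZ.ent_sum_pair hp hvw, add_assoc]

lemma IndepRVs.ent_sum_union_add_ent_sum_inter_le (hp : IsProbMass p) (hZ : IndepRVs p Z)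
    (u v : Finset (Fin n)) :
    ent p (fun ω => ∑ i ∈ u ∪ v, Z i ω) + ent p (fun ω => ∑ i ∈ u ∩ v, Z i ω)
      ≤ ent p (fun ω => ∑ i ∈ u, Z i ω) + ent p (fun ω => ∑ i ∈ v, Z i ω) := by
  classical
  have h := ent_triple_add_ent_le hp (fun ω => ∑ i ∈ u \ v, Z i ω)
    (fun ω => ∑ i ∈ v \ u, Z i ω) (fun ω => ∑ i ∈ u ∪ v, Z i ω)
  have hAC : ent p (fun ω => (∑ i ∈ u \ v, Z i ω, ∑ i ∈ v \ u, Z i ω, ∑ i ∈ u ∪ v, Z i ω))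
      = ent p (fun ω => ∑ i ∈ u \ v, Z i ω) + ent p (fun ω => ∑ i ∈ u ∩ v, Z i ω)
        + ent p (fun ω => ∑ i ∈ v \ u, Z i ω) := by
    rw [← hZ.ent_sum_union_triple hp.2 (disjoint_sdiff_inter u v) disjoint_sdiff_sdiff
      (inter_comm u v ▸ disjoint_sdiff_inter v u).symm, sdiff_union_inter,
      union_sdiff_self_eq_union]
  have hA : ent p (fun ω => (∑ i ∈ u \ v, Z i ω, ∑ i ∈ u ∪ v, Z i ω))
      = ent p (fun ω => ∑ i ∈ u \ v, Z i ω) + ent p (fun ω => ∑ i ∈ v, Z i ω) := by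
    rw [← hZ.ent_sum_union_pair hp.2 sdiff_disjoint, sdiff_union_self_eq_union]
  have hC : ent p (fun ω => (∑ i ∈ v \ u, Z i ω, ∑ i ∈ u ∪ v, Z i ω))
      = ent p (fun ω => ∑ i ∈ v \ u, Z i ω) + ent p (fun ω => ∑ i ∈ u, Z i ω) := by
    rw [← hZ.ent_sum_union_pair hp.2 sdiff_disjoint, sdiff_union_self_eq_union, union_comm]
  linarith

end Sums

/-- For an $r$-regular hypergraph $\mathcal C$ on $[n]$ and independent random
variables in an abelian group, $r\,H(Z_1+\dots+Z_n) \le \sum_{s\in\mathcal C} H(\sum_{i\in s} Z_i)$. -/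
theorem entropy_sum_regular_hypergraph {Ω G : Type*} [Fintype Ω] [AddCommGroup G] {n : ℕ}
    (p : Ω → ℝ) (hp : IsProbMass p) (Z : Fin n → Ω → G) (hZ : IndepRVs p Z)
    (C : Finset (Finset (Fin n))) (r : ℕ)
    (hreg : ∀ i : Fin n, (C.filter (fun s => i ∈ s)).card = r) :
    (r : ℝ) * ent p (fun ω => ∑ i, Z i ω)
      ≤ ∑ s ∈ C, ent p (fun ω => ∑ i ∈ s, Z i ω) := by
  simpa [ent_const hp.2] using mul_sub_le_sum_inter_sub_of_submodular
    (fun s => ent p (fun ω => ∑ i ∈ s, Z i ω)) (hZ.ent_sum_union_add_ent_sum_inter_le hp)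
    C r univ fun i _ => hreg i
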